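/- Unitaries outside the causal cone do not affect the local cost function: let W be an L-qubit unitary acting trivially on qubit j, i.e., W = I_{{j}} ⊗ W' for some unitary W' on the remaining L−1 qubits. Then for all L-qubit unitaries U, V and the same site j, C_LHST^{(j)}(W U, V) = C_LHST^{(j)}(U, V) and C_LHST^{(j)}(U, W V) = C_LHST^{(j)}(U, V). -/

import Mathlib

open scoped Kronecker Matrix

namespace LVQC

/-- The space of operators on qubits indexed by `ι`. -/
abbrev Op (ι : Type*) := Matrix (ι → Fin 2) (ι → Fin 2) ℂ

/-- Two-qubit gates. -/
abbrev G2 := Matrix (Fin 2 × Fin 2) (Fin 2 × Fin 2) ℂ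

variable {ι : Type*} [Fintype ι] [DecidableEq ι]

/-- The operator norm (spectral norm) of a matrix. -/
noncomputable def opNorm {n : Type*} [Fintype n] [DecidableEq n] (M : Matrix n n ℂ) : ℝ :=
  ‖Matrix.toEuclideanCLM (𝕜 := ℂ) M‖

/-- The Bell state `|Φ+⟩_AB` on the doubled system. -/
noncomputable def bell (ι : Type*) [Fintype ι] [DecidableEq ι] :
    (ι → Fin 2) × (ι → Fin 2) → ℂ :=
  fun p => if p.1 = p.2 then ((Real.sqrt (2 ^ Fintype.card ι) : ℝ) : ℂ)⁻¹ else 0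

/-- Projector onto the full Bell state, `|Φ+⟩⟨Φ+|_AB`. -/
noncomputable def bellProj (ι : Type*) [Fintype ι] [DecidableEq ι] :
    Matrix ((ι → Fin 2) × (ι → Fin 2)) ((ι → Fin 2) × (ι → Fin 2)) ℂ :=
  Matrix.of fun p q => bell ι p * star (bell ι q)

/-- Projector `Π_j` onto the Bell pair at site `j`, tensored with the identity elsewhere. -/
noncomputable def PiProj (j : ι) :
    Matrix ((ι → Fin 2) × (ι → Fin 2)) ((ι → Fin 2) × (ι → Fin 2)) ℂ :=
  Matrix.of fun p q =>
    if p.1 j = p.2 j ∧ q.1 j = q.2 j ∧ ∀ k, k ≠ j → p.1 k = q.1 k ∧ p.2 k = q.2 k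
    then (2 : ℂ)⁻¹ else 0

/-- Entrywise complex conjugate `V*`. -/
noncomputable def conjMat (V : Op ι) : Op ι := V.map (starRingEnd ℂ)

/-- The state `ρ_AB(U,V) = (U_A ⊗ V*_B)|Φ+⟩⟨Φ+|(U_A ⊗ V*_B)†`. -/
noncomputable def rho (U V : Op ι) :
    Matrix ((ι → Fin 2) × (ι → Fin 2)) ((ι → Fin 2) × (ι → Fin 2)) ℂ :=
  (U ⊗ₖ conjMat V) * bellProj ι * (U ⊗ₖ conjMat V)ᴴ

/-- Local cost function `C_LHST^{(j)}(U,V) = 1 - Tr[Π_j ρ_AB(U,V)]`. -/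
noncomputable def CLHSTj (j : ι) (U V : Op ι) : ℝ :=
  1 - ((PiProj j * rho U V).trace).re

/-- Averaged local cost function `C_LHST(U,V)`. -/
noncomputable def CLHST (U V : Op ι) : ℝ :=
  (Fintype.card ι : ℝ)⁻¹ * ∑ j, CLHSTj j U V

/-- Global cost function `C_HST(U,V) = 1 - |Tr(U†V)|²/4^L`. -/
noncomputable def CHST (U V : Op ι) : ℝ :=
  1 - ‖(Uᴴ * V).trace‖ ^ 2 / 4 ^ Fintype.card ι

/-- Single-qubit operator `O` placed at site `j`, tensored with the identity elsewhere. -/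
noncomputable def embedAt (j : ι) (O : Matrix (Fin 2) (Fin 2) ℂ) : Op ι :=
  Matrix.of fun a b => O (a j) (b j) * (if ∀ k, k ≠ j → a k = b k then 1 else 0)

/-- Pauli X. -/
def pX : Matrix (Fin 2) (Fin 2) ℂ := !![0, 1; 1, 0]
/-- Pauli Y. -/
def pY : Matrix (Fin 2) (Fin 2) ℂ := !![0, -Complex.I; Complex.I, 0]
/-- Pauli Z. -/
def pZ : Matrix (Fin 2) (Fin 2) ℂ := !![1, 0; 0, -1]

/-- Operator on the qubits in `S`, tensored with the identity on the rest. -/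
noncomputable def embedSub (S : Finset ι) (N : Op ↥S) : Op ι :=
  Matrix.of fun a b =>
    N (fun k => a k.1) (fun k => b k.1) * (if ∀ k ∉ S, a k = b k then 1 else 0)

/-- `M` acts nontrivially only on the qubits in `S`. -/
def ActsOn (M : Op ι) (S : Finset ι) : Prop := ∃ N : Op ↥S, M = embedSub S N

/-- Compression of an operator to the qubits in `S` (left inverse of `embedSub`). -/
noncomputable def compress (S : Finset ι) (M : Op ι) : Op ↥S :=
  Matrix.of fun a b =>
    M (fun k => if h : k ∈ S then a ⟨k, h⟩ else 0) (fun k => if h : k ∈ S then b ⟨k, h⟩ else 0)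

/-- Time evolution `exp(-i H τ)`. -/
noncomputable def timeEvol (τ : ℝ) (H : Op ι) : Op ι :=
  NormedSpace.exp ((-(Complex.I * (τ : ℂ))) • H)

/-- Heisenberg evolution `e^{iHτ} O e^{-iHτ}`. -/
noncomputable def heis (τ : ℝ) (H O : Op ι) : Op ι :=
  NormedSpace.exp ((Complex.I * (τ : ℂ)) • H) * O * timeEvol τ H

/-- Two-qubit gate `G` placed at sites `p`, `q`, tensored with the identity elsewhere. -/
noncomputable def embedPair (p q : ι) (G : G2) : Op ι :=
  Matrix.of fun a b =>
    G (a p, a q) (b p, b q) * (if ∀ k, k ≠ p → k ≠ q → a k = b k then 1 else 0)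

/-- The domain `Λ_{L',j} = {j' : |j - j'| ≤ L'/2}` (linear distance, open boundary). -/
def LambdaF (L : ℕ) (L' : ℕ) (j : Fin L) : Finset (Fin L) :=
  Finset.univ.filter fun j' => 2 * ((j : ℤ) - (j' : ℤ)).natAbs ≤ L'

/-- Gate `G` at positions `(p, p+1)` on `M` qubits (identity if out of range). -/
noncomputable def gateFull (M : ℕ) (p : ℕ) (G : G2) : Op (Fin M) :=
  if h : p + 1 < M then embedPair (⟨p, Nat.lt_of_succ_lt h⟩ : Fin M) ⟨p + 1, h⟩ G else 1

/-- Sublayer of gates on the (0-indexed) pairs `(2k, 2k+1)`. -/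
noncomputable def sublayerA (M : ℕ) (g : ℕ → G2) : Op (Fin M) :=
  ((List.range (M / 2)).map fun k => gateFull M (2 * k) (g k)).prod

/-- Sublayer of gates on the (0-indexed) pairs `(2k+1, 2k+2)`. -/
noncomputable def sublayerB (M : ℕ) (g : ℕ → G2) : Op (Fin M) :=
  ((List.range ((M - 1) / 2)).map fun k => gateFull M (2 * k + 1) (g k)).prod

/-- Depth-`d` brickwork circuit on `M` qubits: the `i`-th layer applies first the gates
`gA i k` on pairs `(2k,2k+1)` (the paper's 1-indexed `(2k-1,2k)`), then the gates `gB i k`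
on pairs `(2k+1,2k+2)` (the paper's `(2k,2k+1)`). -/
noncomputable def brickFull (M d : ℕ) (gA gB : ℕ → ℕ → G2) : Op (Fin M) :=
  ((List.range d).map fun i => sublayerB M (gB i) * sublayerA M (gA i)).prod

/-- Gate at positions `(p, p+1)` restricted to the subsystem `S`: kept exactly when its
support is contained in `S` (identity otherwise). -/
noncomputable def gateSub {L : ℕ} (S : Finset (Fin L)) (p : ℕ) (G : G2) : Op ↥S :=
  if h : p + 1 < L then
    if h2 : (⟨p, Nat.lt_of_succ_lt h⟩ : Fin L) ∈ S ∧ (⟨p + 1, h⟩ : Fin L) ∈ S then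
      embedPair (⟨⟨p, Nat.lt_of_succ_lt h⟩, h2.1⟩ : ↥S) ⟨⟨p + 1, h⟩, h2.2⟩ G
    else 1
  else 1

/-- Sublayer of the restricted ansatz on pairs `(2k,2k+1)`. -/
noncomputable def sublayerASub {L : ℕ} (S : Finset (Fin L)) (g : ℕ → G2) : Op ↥S :=
  ((List.range (L / 2)).map fun k => gateSub S (2 * k) (g k)).prod

/-- Sublayer of the restricted ansatz on pairs `(2k+1,2k+2)`. -/
noncomputable def sublayerBSub {L : ℕ} (S : Finset (Fin L)) (g : ℕ → G2) : Op ↥S :=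
  ((List.range ((L - 1) / 2)).map fun k => gateSub S (2 * k + 1) (g k)).prod

/-- Restricted brickwork ansatz on the subsystem `S ⊆ {1,…,L}`: keeps exactly those
two-qubit gates whose support is contained in `S`. -/
noncomputable def brickSub {L : ℕ} (S : Finset (Fin L)) (d : ℕ) (gA gB : ℕ → ℕ → G2) :
    Op ↥S :=
  ((List.range d).map fun i => sublayerBSub S (gB i) * sublayerASub S (gA i)).prod

/-- Site `s mod M` of the ring of `M` sites. -/
def finMod (M : ℕ) (hM : 0 < M) (s : ℕ) : Fin M := ⟨s % M, Nat.mod_lt _ hM⟩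

/-- Periodic distance on the ring of `M` sites. -/
def pdist (M : ℕ) (j j' : Fin M) : ℕ :=
  min ((j : ℤ) - (j' : ℤ)).natAbs (M - ((j : ℤ) - (j' : ℤ)).natAbs)

open Classical in
/-- The domain `Λ_{L',j}` of periodic-distance radius `r = L'/2` around site `j`. -/
noncomputable def LambdaP (M : ℕ) (r : ℝ) (j : Fin M) : Finset (Fin M) :=
  Finset.univ.filter fun j' => (pdist M j j' : ℝ) ≤ r

/-- Local term `h₀` (an operator on a window of `w` consecutive sites) translated so that
its window starts at site `s`, with periodic wrap-around, tensored with the identity. -/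
noncomputable def embedWindow (M w : ℕ) (hM : 0 < M) (s : ℕ) (h0 : Op (Fin w)) :
    Op (Fin M) :=
  Matrix.of fun a b =>
    h0 (fun t => a (finMod M hM (s + t))) (fun t => b (finMod M hM (s + t))) *
      (if ∀ k : Fin M, (∀ t : Fin w, k ≠ finMod M hM (s + t)) → a k = b k then 1 else 0)

/-- Translation-invariant Hamiltonian with periodic boundary conditions on `M` sites,
generated by the seed `h₀` acting on windows of `w` consecutive sites (range `w - 1`). -/
noncomputable def HPBC (M w : ℕ) (hM : 0 < M) (h0 : Op (Fin w)) : Op (Fin M) :=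
  ∑ s ∈ Finset.range M, embedWindow M w hM s h0

/-- Restriction `H^{(L',j)}` of `HPBC`: the sum of those terms whose support is contained
in the periodic ball `Λ_{L',j}` of radius `r = L'/2` around `j`. -/
noncomputable def HPRest (M w : ℕ) (hM : 0 < M) (h0 : Op (Fin w)) (r : ℝ) (j : Fin M) :
    Op (Fin M) :=
  ∑ s ∈ (Finset.range M).filter
      (fun s => ∀ t : Fin w, finMod M hM (s + t) ∈ LambdaP M r j),
    embedWindow M w hM s h0

/-- One layer of the translation-invariant PBC brickwork ansatz: the gate `gA` on all
pairs `(2k,2k+1)` is applied first, then the gate `gB` on all pairs `(2k+1,2k+2 mod M)`,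
including the boundary pair. -/
noncomputable def layerPBC (M : ℕ) (hM : 0 < M) (gA gB : G2) : Op (Fin M) :=
  (((List.range (M / 2)).map fun k =>
      embedPair (finMod M hM (2 * k + 1)) (finMod M hM (2 * k + 2)) gB).prod) *
  (((List.range (M / 2)).map fun k =>
      embedPair (finMod M hM (2 * k)) (finMod M hM (2 * k + 1)) gA).prod)

/-- Depth-`d` translation-invariant PBC brickwork ansatz, with position-independent gates
`gA i`, `gB i` within each layer `i`. -/
noncomputable def brickPBC (M : ℕ) (hM : 0 < M) (d : ℕ) (gA gB : ℕ → G2) : Op (Fin M) :=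
  ((List.range d).map fun i => layerPBC M hM (gA i) (gB i)).prod

lemma embedSub_mul (S : Finset ι) (N N' : Op ↥S) :
    embedSub S N * embedSub S N' = embedSub S (N * N') := by
  ext a b
  simp only [embedSub, Matrix.mul_apply, Matrix.of_apply]
  set e := (Equiv.piEquivPiSubtypeProd (· ∈ S) (fun _ : ι => Fin 2)).symm with he
  rw [← Equiv.sum_comp e fun c => (N (fun k => a k.1) (fun k => c k.1) *
    (if ∀ k ∉ S, a k = c k then 1 else 0)) * (N' (fun k => c k.1) (fun k => b k.1) *
    (if ∀ k ∉ S, c k = b k then 1 else 0)), Fintype.sum_prod_type]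
  have hfix : ∀ (f : ↥S → Fin 2) (g : {x : ι // x ∉ S} → Fin 2),
      (fun k : ↥S => e (f, g) k.1) = f := by
    intro f g; funext k
    simp [he, Equiv.piEquivPiSubtypeProd, k.2]
  have hc1 : ∀ (f : ↥S → Fin 2) (g : {x : ι // x ∉ S} → Fin 2),
      (∀ k ∉ S, a k = e (f, g) k) ↔ g = fun k : {x : ι // x ∉ S} => a k.1 := by
    intro f g
    constructor
    · intro h; funext k
      have := h k.1 k.2
      simp [he, Equiv.piEquivPiSubtypeProd, k.2] at this
      exact this.symm
    · intro h k hk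
      subst h
      simp [he, Equiv.piEquivPiSubtypeProd, hk]
  have hc2 : ∀ (f : ↥S → Fin 2) (g : {x : ι // x ∉ S} → Fin 2),
      (∀ k ∉ S, e (f, g) k = b k) ↔ g = fun k : {x : ι // x ∉ S} => b k.1 := by
    intro f g
    constructor
    · intro h; funext k
      have := h k.1 k.2
      simp [he, Equiv.piEquivPiSubtypeProd, k.2] at this
      exact this
    · intro h k hk
      subst h
      simp [he, Equiv.piEquivPiSubtypeProd, hk]
  simp only [hfix]
  simp only [fun f g => propext (hc1 f g), fun f g => propext (hc2 f g)]
  simp only [mul_ite, ite_mul, mul_one, mul_zero, zero_mul, one_mul,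
    Finset.sum_ite_eq', Finset.mem_univ, if_true]
  by_cases hab : ∀ k ∉ S, a k = b k
  · have hg : (fun k : {x : ι // x ∉ S} => a k.1) = fun k : {x : ι // x ∉ S} => b k.1 :=
      funext fun k => hab k.1 k.2
    rw [if_pos hab]
    exact Finset.sum_congr rfl fun f _ => by rw [if_pos hg.symm]
  · have hg : (fun k : {x : ι // x ∉ S} => a k.1) ≠ fun k : {x : ι // x ∉ S} => b k.1 := by
      intro h
      exact hab fun k hk => congrFun h ⟨k, hk⟩
    rw [if_neg hab]
    refine Finset.sum_eq_zero fun f _ => ?_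
    rw [if_neg fun h => hg h.symm]


lemma notmem_compl_singleton (j k : ι) : k ∉ (({j} : Finset ι)ᶜ) ↔ k = j := by simp

lemma mem_compl_ne (j : ι) (k : ↥(({j} : Finset ι)ᶜ)) : (k : ι) ≠ j := by
  have := k.2
  simp only [Finset.mem_compl, Finset.mem_singleton] at this
  exact this

lemma PiProj_comm_left (j : ι) (N : Op ↥(({j} : Finset ι)ᶜ)) :
    PiProj j * (embedSub ({j} : Finset ι)ᶜ N ⊗ₖ (1 : Op ι)) =
      (embedSub ({j} : Finset ι)ᶜ N ⊗ₖ (1 : Op ι)) * PiProj j := by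
  ext ⟨p1, p2⟩ ⟨q1, q2⟩
  rw [Matrix.mul_apply, Matrix.mul_apply]
  have hL : (∑ r : (ι → Fin 2) × (ι → Fin 2),
      PiProj j (p1, p2) r * (embedSub ({j} : Finset ι)ᶜ N ⊗ₖ (1 : Op ι)) r (q1, q2)) =
      (if p1 j = p2 j ∧ ∀ k, k ≠ j → p2 k = q2 k then (2 : ℂ)⁻¹ else 0) *
        ((if q2 j = q1 j then (1 : ℂ) else 0) *
          N (fun k => p1 k.1) (fun k => q1 k.1)) := by
    rw [Finset.sum_eq_single ((Function.update p1 j (q2 j)), q2)]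
    · simp only [PiProj, embedSub, Matrix.of_apply, Matrix.kroneckerMap_apply,
        Matrix.one_apply, eq_self_iff_true, if_true, mul_one]
      have h1 : (p1 j = p2 j ∧ Function.update p1 j (q2 j) j = q2 j ∧
          ∀ k, k ≠ j → p1 k = Function.update p1 j (q2 j) k ∧ p2 k = q2 k) ↔
          (p1 j = p2 j ∧ ∀ k, k ≠ j → p2 k = q2 k) := by
        constructor
        · rintro ⟨h1, _, h3⟩; exact ⟨h1, fun k hk => (h3 k hk).2⟩
        · rintro ⟨h1, h3⟩
          exact ⟨h1, Function.update_self _ _ _,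
            fun k hk => ⟨(Function.update_of_ne hk _ _).symm, h3 k hk⟩⟩
      have h2 : (fun k : ↥(({j} : Finset ι)ᶜ) => Function.update p1 j (q2 j) k.1) =
          fun k : ↥(({j} : Finset ι)ᶜ) => p1 k.1 := by
        funext k
        exact Function.update_of_ne (mem_compl_ne j k) _ _
      have h3 : (∀ k ∉ (({j} : Finset ι)ᶜ), Function.update p1 j (q2 j) k = q1 k) ↔
          q2 j = q1 j := by
        constructor
        · intro h
          have := h j ((notmem_compl_singleton j j).mpr rfl)
          rwa [Function.update_self] at this
        · intro h k hk
          rw [(notmem_compl_singleton j k).mp hk, Function.update_self]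
          exact h
      rw [h2, if_congr h1 rfl rfl, if_congr h3 rfl rfl]
      first
      | (simp only [if_true]; ring)
      | ring
    · rintro ⟨r1, r2⟩ - hr
      by_cases h2 : r2 = q2
      · subst h2
        by_cases hc : p1 j = p2 j ∧ r1 j = r2 j ∧ ∀ k, k ≠ j → p1 k = r1 k ∧ p2 k = r2 k
        · exfalso
          apply hr
          have hre : r1 = Function.update p1 j (r2 j) := by
            funext l
            by_cases hl : l = j
            · subst hl; rw [hc.2.1, Function.update_self]
            · rw [← (hc.2.2 l hl).1, Function.update_of_ne hl]
          rw [hre]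
        · simp [PiProj, hc]
      · simp [Matrix.one_apply, h2]
    · intro h; exact absurd (Finset.mem_univ _) h
  have hR : (∑ r : (ι → Fin 2) × (ι → Fin 2),
      (embedSub ({j} : Finset ι)ᶜ N ⊗ₖ (1 : Op ι)) (p1, p2) r * PiProj j r (q1, q2)) =
      (if q1 j = q2 j ∧ ∀ k, k ≠ j → p2 k = q2 k then (2 : ℂ)⁻¹ else 0) *
        ((if p1 j = p2 j then (1 : ℂ) else 0) *
          N (fun k => p1 k.1) (fun k => q1 k.1)) := by
    rw [Finset.sum_eq_single ((Function.update q1 j (p2 j)), p2)]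
    · simp only [PiProj, embedSub, Matrix.of_apply, Matrix.kroneckerMap_apply,
        Matrix.one_apply, if_pos rfl, mul_one]
      have h1 : (Function.update q1 j (p2 j) j = p2 j ∧ q1 j = q2 j ∧
          ∀ k, k ≠ j → Function.update q1 j (p2 j) k = q1 k ∧ p2 k = q2 k) ↔
          (q1 j = q2 j ∧ ∀ k, k ≠ j → p2 k = q2 k) := by
        constructor
        · rintro ⟨_, h1, h3⟩; exact ⟨h1, fun k hk => (h3 k hk).2⟩
        · rintro ⟨h1, h3⟩
          exact ⟨Function.update_self _ _ _, h1,
            fun k hk => ⟨Function.update_of_ne hk _ _, h3 k hk⟩⟩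
      have h2 : (fun k : ↥(({j} : Finset ι)ᶜ) => Function.update q1 j (p2 j) k.1) =
          fun k : ↥(({j} : Finset ι)ᶜ) => q1 k.1 := by
        funext k
        exact Function.update_of_ne (mem_compl_ne j k) _ _
      have h3 : (∀ k ∉ (({j} : Finset ι)ᶜ), p1 k = Function.update q1 j (p2 j) k) ↔
          p1 j = p2 j := by
        constructor
        · intro h
          have := h j ((notmem_compl_singleton j j).mpr rfl)
          rwa [Function.update_self] at this
        · intro h k hk
          rw [(notmem_compl_singleton j k).mp hk, Function.update_self]
          exact h
      rw [h2, if_congr h1 rfl rfl, if_congr h3 rfl rfl]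
      first
      | (simp only [if_true]; ring)
      | ring
    · rintro ⟨r1, r2⟩ - hr
      by_cases h2 : p2 = r2
      · subst h2
        by_cases hc : r1 j = p2 j ∧ q1 j = q2 j ∧ ∀ k, k ≠ j → r1 k = q1 k ∧ p2 k = q2 k
        · exfalso
          apply hr
          have hre : r1 = Function.update q1 j (p2 j) := by
            funext l
            by_cases hl : l = j
            · subst hl; rw [hc.1, Function.update_self]
            · rw [(hc.2.2 l hl).1, Function.update_of_ne hl]
          rw [hre]
        · simp [PiProj, hc]
      · simp [Matrix.one_apply, h2]
    · intro h; exact absurd (Finset.mem_univ _) h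
  rw [hL, hR, if_congr (show (q2 j = q1 j) ↔ (q1 j = q2 j) from eq_comm) rfl rfl]
  by_cases h1 : p1 j = p2 j <;> by_cases h2 : q1 j = q2 j <;>
    by_cases h3 : ∀ k, k ≠ j → p2 k = q2 k <;>
    simp [h1, h2, h3]



lemma embedSub_one (S : Finset ι) : embedSub S (1 : Op ↥S) = 1 := by
  ext a b
  simp only [embedSub, Matrix.of_apply, Matrix.one_apply]
  by_cases h : a = b
  · subst h; simp
  · have : ¬ ((fun k : ↥S => a k.1) = fun k : ↥S => b k.1) ∨ ¬ (∀ k ∉ S, a k = b k) := by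
      by_contra hc
      push_neg at hc
      exact h (funext fun k => by
        by_cases hk : k ∈ S
        · exact congrFun hc.1 ⟨k, hk⟩
        · exact hc.2 k hk)
    rcases this with h1 | h1
    · simp [if_neg h1, if_neg h]
    · simp [if_neg h1, if_neg h]

lemma embedSub_conjTranspose (S : Finset ι) (N : Op ↥S) :
    (embedSub S N)ᴴ = embedSub S Nᴴ := by
  ext a b
  simp only [Matrix.conjTranspose_apply, embedSub, Matrix.of_apply, star_mul',
    apply_ite (star : ℂ → ℂ), star_one, star_zero]
  rw [if_congr (show (∀ k ∉ S, b k = a k) ↔ (∀ k ∉ S, a k = b k) from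
    forall₂_congr fun k _ => eq_comm) rfl rfl]

lemma conjMat_embedSub (S : Finset ι) (N : Op ↥S) :
    conjMat (embedSub S N) = embedSub S (conjMat N) := by
  ext a b
  simp only [conjMat, Matrix.map_apply, embedSub, Matrix.of_apply, map_mul,
    apply_ite (starRingEnd ℂ), map_one, map_zero]

lemma conjMat_mul (A B : Op ι) : conjMat (A * B) = conjMat A * conjMat B := by
  simp [conjMat, Matrix.map_mul]

lemma conjMat_one : conjMat (1 : Op ι) = 1 := by
  simp [conjMat, Matrix.map_one]

lemma conjMat_conjTranspose (A : Op ι) : (conjMat A)ᴴ = conjMat (Aᴴ) := by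
  ext a b
  simp [conjMat, Matrix.conjTranspose_apply]

lemma kron_conjT (A B : Op ι) :
    (A ⊗ₖ B)ᴴ = Aᴴ ⊗ₖ Bᴴ := by
  ext ⟨i1, i2⟩ ⟨j1, j2⟩
  simp [Matrix.conjTranspose_apply, Matrix.kroneckerMap_apply, star_mul']

lemma PiProj_comm_right (j : ι) (N : Op ↥(({j} : Finset ι)ᶜ)) :
    PiProj j * ((1 : Op ι) ⊗ₖ embedSub ({j} : Finset ι)ᶜ N) =
      ((1 : Op ι) ⊗ₖ embedSub ({j} : Finset ι)ᶜ N) * PiProj j := by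
  ext ⟨p1, p2⟩ ⟨q1, q2⟩
  rw [Matrix.mul_apply, Matrix.mul_apply]
  have hL : (∑ r : (ι → Fin 2) × (ι → Fin 2),
      PiProj j (p1, p2) r * ((1 : Op ι) ⊗ₖ embedSub ({j} : Finset ι)ᶜ N) r (q1, q2)) =
      (if p1 j = p2 j ∧ ∀ k, k ≠ j → p1 k = q1 k then (2 : ℂ)⁻¹ else 0) *
        ((if q1 j = q2 j then (1 : ℂ) else 0) *
          N (fun k => p2 k.1) (fun k => q2 k.1)) := by
    rw [Finset.sum_eq_single (q1, Function.update p2 j (q1 j))]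
    · simp only [PiProj, embedSub, Matrix.of_apply, Matrix.kroneckerMap_apply,
        Matrix.one_apply, eq_self_iff_true, if_true, one_mul]
      have h1 : (p1 j = p2 j ∧ q1 j = Function.update p2 j (q1 j) j ∧
          ∀ k, k ≠ j → p1 k = q1 k ∧ p2 k = Function.update p2 j (q1 j) k) ↔
          (p1 j = p2 j ∧ ∀ k, k ≠ j → p1 k = q1 k) := by
        constructor
        · rintro ⟨h1, _, h3⟩; exact ⟨h1, fun k hk => (h3 k hk).1⟩
        · rintro ⟨h1, h3⟩
          exact ⟨h1, (Function.update_self j (q1 j) p2).symm,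
            fun k hk => ⟨h3 k hk, (Function.update_of_ne hk _ _).symm⟩⟩
      have h2 : (fun k : ↥(({j} : Finset ι)ᶜ) => Function.update p2 j (q1 j) k.1) =
          fun k : ↥(({j} : Finset ι)ᶜ) => p2 k.1 := by
        funext k
        exact Function.update_of_ne (mem_compl_ne j k) _ _
      have h3 : (∀ k ∉ (({j} : Finset ι)ᶜ), Function.update p2 j (q1 j) k = q2 k) ↔
          q1 j = q2 j := by
        constructor
        · intro h
          have := h j ((notmem_compl_singleton j j).mpr rfl)
          rwa [Function.update_self] at this
        · intro h k hk
          rw [(notmem_compl_singleton j k).mp hk, Function.update_self]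
          exact h
      rw [h2, if_congr h1 rfl rfl, if_congr h3 rfl rfl]
      first
      | (simp only [if_true]; ring)
      | ring
    · rintro ⟨r1, r2⟩ - hr
      by_cases h2 : r1 = q1
      · subst h2
        by_cases hc : p1 j = p2 j ∧ r1 j = r2 j ∧ ∀ k, k ≠ j → p1 k = r1 k ∧ p2 k = r2 k
        · exfalso
          apply hr
          have hre : r2 = Function.update p2 j (r1 j) := by
            funext l
            by_cases hl : l = j
            · subst hl; rw [Function.update_self]; exact hc.2.1.symm
            · rw [Function.update_of_ne hl]; exact ((hc.2.2 l hl).2).symm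
          rw [hre]
        · simp [PiProj, hc]
      · simp [Matrix.one_apply, h2]
    · intro h; exact absurd (Finset.mem_univ _) h
  have hR : (∑ r : (ι → Fin 2) × (ι → Fin 2),
      ((1 : Op ι) ⊗ₖ embedSub ({j} : Finset ι)ᶜ N) (p1, p2) r * PiProj j r (q1, q2)) =
      (if q1 j = q2 j ∧ ∀ k, k ≠ j → p1 k = q1 k then (2 : ℂ)⁻¹ else 0) *
        ((if p2 j = p1 j then (1 : ℂ) else 0) *
          N (fun k => p2 k.1) (fun k => q2 k.1)) := by
    rw [Finset.sum_eq_single (p1, Function.update q2 j (p1 j))]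
    · simp only [PiProj, embedSub, Matrix.of_apply, Matrix.kroneckerMap_apply,
        Matrix.one_apply, eq_self_iff_true, if_true, one_mul]
      have h1 : (p1 j = Function.update q2 j (p1 j) j ∧ q1 j = q2 j ∧
          ∀ k, k ≠ j → p1 k = q1 k ∧ Function.update q2 j (p1 j) k = q2 k) ↔
          (q1 j = q2 j ∧ ∀ k, k ≠ j → p1 k = q1 k) := by
        constructor
        · rintro ⟨_, h1, h3⟩; exact ⟨h1, fun k hk => (h3 k hk).1⟩
        · rintro ⟨h1, h3⟩
          exact ⟨(Function.update_self j (p1 j) q2).symm, h1,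
            fun k hk => ⟨h3 k hk, Function.update_of_ne hk _ _⟩⟩
      have h2 : (fun k : ↥(({j} : Finset ι)ᶜ) => Function.update q2 j (p1 j) k.1) =
          fun k : ↥(({j} : Finset ι)ᶜ) => q2 k.1 := by
        funext k
        exact Function.update_of_ne (mem_compl_ne j k) _ _
      have h3 : (∀ k ∉ (({j} : Finset ι)ᶜ), p2 k = Function.update q2 j (p1 j) k) ↔
          p2 j = p1 j := by
        constructor
        · intro h
          have := h j ((notmem_compl_singleton j j).mpr rfl)
          rwa [Function.update_self] at this
        · intro h k hk
          rw [(notmem_compl_singleton j k).mp hk, Function.update_self]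
          exact h
      rw [h2, if_congr h1 rfl rfl, if_congr h3 rfl rfl]
      first
      | (simp only [if_true]; ring)
      | ring
    · rintro ⟨r1, r2⟩ - hr
      by_cases h2 : p1 = r1
      · subst h2
        by_cases hc : p1 j = r2 j ∧ q1 j = q2 j ∧ ∀ k, k ≠ j → p1 k = q1 k ∧ r2 k = q2 k
        · exfalso
          apply hr
          have hre : r2 = Function.update q2 j (p1 j) := by
            funext l
            by_cases hl : l = j
            · subst hl; rw [Function.update_self]; exact hc.1.symm
            · rw [Function.update_of_ne hl]; exact (hc.2.2 l hl).2
          rw [hre]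
        · simp [PiProj, hc]
      · simp [Matrix.one_apply, h2]
    · intro h; exact absurd (Finset.mem_univ _) h
  rw [hL, hR, if_congr (show (p2 j = p1 j) ↔ (p1 j = p2 j) from eq_comm) rfl rfl]
  by_cases h1 : p1 j = p2 j <;> by_cases h2 : q1 j = q2 j <;>
    by_cases h3 : ∀ k, k ≠ j → p1 k = q1 k <;>
    simp [h1, h2, h3]

/-- Unitaries outside the causal cone do not affect the local cost
function: if `W = I_{{j}} ⊗ W'` with `W'` a unitary on the qubits other than `j`, then
`C_LHST^{(j)}(WU, V) = C_LHST^{(j)}(U, V)` and `C_LHST^{(j)}(U, WV) = C_LHST^{(j)}(U, V)`. -/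
theorem local_cost_outside_causal_cone (L : ℕ) (j : Fin L) (U V : Op (Fin L))
    (hU : U ∈ Matrix.unitaryGroup (Fin L → Fin 2) ℂ)
    (hV : V ∈ Matrix.unitaryGroup (Fin L → Fin 2) ℂ)
    (W' : Op ↥(({j} : Finset (Fin L))ᶜ))
    (hW' : W' ∈ Matrix.unitaryGroup (↥(({j} : Finset (Fin L))ᶜ) → Fin 2) ℂ) :
    CLHSTj j (embedSub ({j} : Finset (Fin L))ᶜ W' * U) V = CLHSTj j U V
    ∧ CLHSTj j U (embedSub ({j} : Finset (Fin L))ᶜ W' * V) = CLHSTj j U V := by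
  have hW'u : W'ᴴ * W' = 1 := by
    have h := hW'.1
    rwa [Matrix.star_eq_conjTranspose] at h
  have hWW : (embedSub ({j} : Finset (Fin L))ᶜ W')ᴴ * embedSub ({j} : Finset (Fin L))ᶜ W' = 1 := by
    rw [embedSub_conjTranspose, embedSub_mul, hW'u, embedSub_one]
  constructor
  · have key : rho (embedSub ({j} : Finset (Fin L))ᶜ W' * U) V =
        (embedSub ({j} : Finset (Fin L))ᶜ W' ⊗ₖ (1 : Op (Fin L))) * rho U V *
          (embedSub ({j} : Finset (Fin L))ᶜ W' ⊗ₖ (1 : Op (Fin L)))ᴴ := by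
      rw [rho, rho,
        show (embedSub ({j} : Finset (Fin L))ᶜ W' * U) ⊗ₖ conjMat V =
            (embedSub ({j} : Finset (Fin L))ᶜ W' ⊗ₖ (1 : Op (Fin L))) * (U ⊗ₖ conjMat V) by
          rw [← Matrix.mul_kronecker_mul, one_mul],
        Matrix.conjTranspose_mul]
      simp only [mul_assoc]
    unfold CLHSTj
    rw [key]
    simp only [← mul_assoc]
    rw [PiProj_comm_left, Matrix.trace_mul_comm]
    simp only [← mul_assoc]
    rw [kron_conjT, Matrix.conjTranspose_one, ← Matrix.mul_kronecker_mul, hWW, one_mul,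
      Matrix.one_kronecker_one, one_mul]
  · have hWcWc : (embedSub ({j} : Finset (Fin L))ᶜ (conjMat W'))ᴴ *
        embedSub ({j} : Finset (Fin L))ᶜ (conjMat W') = 1 := by
      rw [embedSub_conjTranspose, embedSub_mul, conjMat_conjTranspose, ← conjMat_mul, hW'u,
        conjMat_one, embedSub_one]
    have key : rho U (embedSub ({j} : Finset (Fin L))ᶜ W' * V) =
        ((1 : Op (Fin L)) ⊗ₖ embedSub ({j} : Finset (Fin L))ᶜ (conjMat W')) * rho U V *
          ((1 : Op (Fin L)) ⊗ₖ embedSub ({j} : Finset (Fin L))ᶜ (conjMat W'))ᴴ := by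
      rw [rho, rho,
        show U ⊗ₖ conjMat (embedSub ({j} : Finset (Fin L))ᶜ W' * V) =
            ((1 : Op (Fin L)) ⊗ₖ embedSub ({j} : Finset (Fin L))ᶜ (conjMat W')) *
              (U ⊗ₖ conjMat V) by
          rw [conjMat_mul, conjMat_embedSub, ← Matrix.mul_kronecker_mul, one_mul],
        Matrix.conjTranspose_mul]
      simp only [mul_assoc]
    unfold CLHSTj
    rw [key]
    simp only [← mul_assoc]
    rw [PiProj_comm_right, Matrix.trace_mul_comm]
    simp only [← mul_assoc]
    rw [kron_conjT, Matrix.conjTranspose_one, ← Matrix.mul_kronecker_mul, hWcWc, one_mul,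
      Matrix.one_kronecker_one, one_mul]


end LVQC
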